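/- Let λ > 0 and 0 < α < 1, and let u : ℝ → ℝ be smooth with compact support. Then for every ω ∈ ℝ, the Fourier transform of the left tempered fractional derivative satisfies F[D₊^{α,λ} u](ω) = (λ + iω)^{α} F[u](ω), where (λ + iω)^{α} is the principal branch complex power. -/

import Mathlib

open MeasureTheory Set Filter Complex
open scoped Topology Convolution

lemma aux_measOn (c z : ℂ) :
    AEStronglyMeasurable (fun t : ℝ => (t : ℂ) ^ c * Complex.exp (-(z * t)))
      (volume.restrict (Set.Ioi 0)) := by
  apply ContinuousOn.aestronglyMeasurable ?_ measurableSet_Ioi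
  intro t ht
  exact ((Complex.continuousAt_ofReal_cpow_const t c (Or.inr (ne_of_gt ht))).mul
    ((Complex.continuous_exp.comp (by fun_prop)).continuousAt)).continuousWithinAt

lemma aux_integrableOn {a : ℝ} (ha : 0 < a) {z : ℂ} (hz : 0 < z.re) :
    IntegrableOn (fun t : ℝ => (t : ℂ) ^ ((a : ℂ) - 1) * Complex.exp (-(z * t)))
      (Set.Ioi 0) := by
  have hbound : IntegrableOn (fun t : ℝ => t ^ (a - 1) * Real.exp (-z.re * t)) (Set.Ioi 0) := by
    have := integrableOn_rpow_mul_exp_neg_mul_rpow (s := a - 1) (p := 1) (b := z.re)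
      (by linarith) one_pos hz
    simpa [Real.rpow_one] using this
  refine Integrable.mono' hbound (aux_measOn _ z) ?_
  filter_upwards [ae_restrict_mem measurableSet_Ioi] with t ht
  rw [norm_mul, Complex.norm_exp,
    Complex.norm_cpow_eq_rpow_re_of_pos ht]
  simp [Complex.sub_re, Complex.ofReal_re, mul_comm]

lemma aux_diffOn {a : ℝ} (ha : 0 < a) :
    DifferentiableOn ℂ
      (fun z : ℂ => ∫ t in Set.Ioi (0:ℝ), (t : ℂ) ^ ((a : ℂ) - 1) * Complex.exp (-(z * t)))
      {w : ℂ | 0 < w.re} := by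
  intro z₀ hz₀
  apply DifferentiableAt.differentiableWithinAt
  have hr0 : 0 < z₀.re := hz₀
  have key := hasDerivAt_integral_of_dominated_loc_of_deriv_le
    (μ := volume.restrict (Set.Ioi 0))
    (F := fun (z : ℂ) (t : ℝ) => (t : ℂ) ^ ((a : ℂ) - 1) * Complex.exp (-(z * t)))
    (F' := fun (z : ℂ) (t : ℝ) => (t : ℂ) ^ ((a : ℂ) - 1) * (Complex.exp (-(z * t)) * (-(t : ℂ))))
    (x₀ := z₀) (s := Metric.ball z₀ (z₀.re / 2))
    (bound := fun t : ℝ => t ^ a * Real.exp (-(z₀.re / 2) * t))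
    (Metric.ball_mem_nhds _ (half_pos hr0))
    (Eventually.of_forall fun z => aux_measOn _ z)
    (aux_integrableOn ha hr0)
    ?_ ?_ ?_ ?_
  · exact key.2.differentiableAt
  · -- measurability of F' z₀
    apply ContinuousOn.aestronglyMeasurable ?_ measurableSet_Ioi
    intro t ht
    refine ((Complex.continuousAt_ofReal_cpow_const t _ (Or.inr (ne_of_gt ht))).mul
      (((Complex.continuous_exp.comp (by fun_prop)).continuousAt).mul
        (by fun_prop))).continuousWithinAt
  · -- bound
    filter_upwards [ae_restrict_mem measurableSet_Ioi] with t ht z hzball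
    have hzre : z₀.re / 2 ≤ z.re := by
      have h1 : |z.re - z₀.re| ≤ ‖z - z₀‖ := by
        simpa using Complex.abs_re_le_norm (z - z₀)
      have h2 : ‖z - z₀‖ < z₀.re / 2 := by
        simpa [Metric.mem_ball, Complex.dist_eq] using hzball
      have := abs_lt.mp (lt_of_le_of_lt h1 h2)
      linarith [this.1]
    rw [norm_mul, norm_mul, norm_neg,
      Complex.norm_exp, Complex.norm_cpow_eq_rpow_re_of_pos ht,
      Complex.norm_of_nonneg ht.le]
    have hpow : t ^ (a - 1) * t = t ^ a := by
      nth_rewrite 2 [← Real.rpow_one t]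
      rw [← Real.rpow_add ht]; norm_num
    have hre : (-(z * (t:ℂ))).re = -(z.re * t) := by simp [Complex.mul_re]
    rw [show ((a:ℂ)-1).re = a - 1 by simp, hre]
    calc t ^ (a-1) * (Real.exp (-(z.re*t)) * t) = t^a * Real.exp (-(z.re*t)) := by
          rw [← hpow]; ring
    _ ≤ t ^ a * Real.exp (-(z₀.re/2)*t) := by
        apply mul_le_mul_of_nonneg_left _ (Real.rpow_nonneg ht.le _)
        exact Real.exp_le_exp.2 (by nlinarith [mul_le_mul_of_nonneg_right hzre ht.le])
  · -- bound integrable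
    have := integrableOn_rpow_mul_exp_neg_mul_rpow (s := a) (p := 1) (b := z₀.re/2)
      (by linarith) one_pos (half_pos hr0)
    simpa [Real.rpow_one, IntegrableOn] using this
  · -- differentiability in z
    filter_upwards [ae_restrict_mem measurableSet_Ioi] with t ht z _
    have h1 : HasDerivAt (fun z : ℂ => -(z * (t:ℂ))) (-(t:ℂ)) z := by
      simpa using ((hasDerivAt_id z).mul_const ((t:ℂ))).fun_neg
    simpa using (h1.cexp).const_mul ((t:ℂ) ^ ((a:ℂ) - 1))

lemma gamma_complex_scale {a : ℝ} (ha : 0 < a) {z : ℂ} (hz : 0 < z.re) :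
    ∫ t in Set.Ioi (0:ℝ), (t : ℂ) ^ ((a : ℂ) - 1) * Complex.exp (-(z * t)) =
      (z ^ (a : ℂ))⁻¹ * Complex.Gamma a := by
  set S : Set ℂ := {w : ℂ | 0 < w.re} with hS
  have hSopen : IsOpen S := isOpen_lt continuous_const Complex.continuous_re
  set f : ℂ → ℂ := fun w => ∫ t in Set.Ioi (0:ℝ), (t : ℂ) ^ ((a : ℂ) - 1) * Complex.exp (-(w * t))
    with hf
  set g : ℂ → ℂ := fun w => (w ^ (a : ℂ))⁻¹ * Complex.Gamma a with hg
  have hfa : AnalyticOnNhd ℂ f S := (aux_diffOn ha).analyticOnNhd hSopen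
  have hga : AnalyticOnNhd ℂ g S := by
    apply DifferentiableOn.analyticOnNhd ?_ hSopen
    intro w hw
    have hw0 : w ≠ 0 := fun h => by simp [hS, h] at hw
    have h1 : DifferentiableAt ℂ (fun w : ℂ => w ^ (a : ℂ)) w :=
      differentiableAt_id.cpow (differentiableAt_const _) (Or.inl hw)
    have h2 : w ^ (a : ℂ) ≠ 0 := by
      rw [Ne, Complex.cpow_eq_zero_iff]
      tauto
    exact ((h1.inv h2).mul (differentiableAt_const _)).differentiableWithinAt
  have heqon : Set.EqOn f g S := by
    apply hfa.eqOn_of_preconnected_of_frequently_eq hga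
      ((convex_halfSpace_re_gt (0:ℝ)).isPreconnected) (show (1:ℂ) ∈ S by simp [hS])
    -- frequently equal near 1
    have hseq : Tendsto (fun n : ℕ => ((1 + ((n:ℝ)+1)⁻¹ : ℝ) : ℂ)) atTop (𝓝[≠] (1:ℂ)) := by
      apply tendsto_nhdsWithin_of_tendsto_nhds_of_eventually_within
      · have h0 : Tendsto (fun n : ℕ => (1 + ((n:ℝ)+1)⁻¹ : ℝ)) atTop (𝓝 1) := by
          have := tendsto_one_div_add_atTop_nhds_zero_nat (𝕜 := ℝ)
          simp only [one_div] at this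
          simpa using tendsto_const_nhds.add this
        have := (Complex.continuous_ofReal.tendsto 1).comp h0
        simpa [Function.comp_def] using this
      · filter_upwards with n
        simp only [Set.mem_compl_iff, Set.mem_singleton_iff]
        intro h
        rw [show (1:ℂ) = ((1:ℝ):ℂ) by norm_num, Complex.ofReal_inj] at h
        have : ((n:ℝ)+1)⁻¹ > 0 := by positivity
        linarith
    apply hseq.frequently
    apply Frequently.of_forall
    intro n
    set r : ℝ := 1 + ((n:ℝ)+1)⁻¹ with hr
    have hrpos : 0 < r := by positivity
    have hint := Complex.integral_cpow_mul_exp_neg_mul_Ioi (a := (a:ℂ)) (r := r)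
      (by simpa using ha) hrpos
    have harg : Complex.arg (r : ℂ) ≠ Real.pi := by
      rw [Complex.arg_ofReal_of_nonneg hrpos.le]
      exact fun h => Real.pi_ne_zero h.symm
    calc f (r:ℂ) = ∫ t in Set.Ioi (0:ℝ), (t:ℂ) ^ ((a:ℂ)-1) * Complex.exp (-(r * t)) := rfl
      _ = (1/(r:ℂ)) ^ (a:ℂ) * Complex.Gamma a := by
          rw [← hint]
      _ = g (r:ℂ) := by
          rw [hg, one_div, Complex.inv_cpow _ _ harg]
  exact heqon hz

lemma aux_parts (v : ℝ → ℝ) (hv : ContDiff ℝ (⊤ : ℕ∞) v) (hcv : HasCompactSupport v) (z : ℂ) :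
    ∫ s : ℝ, ((deriv v s : ℝ) : ℂ) * Complex.exp (-(z * s)) =
      z * ∫ s : ℝ, (v s : ℂ) * Complex.exp (-(z * s)) := by
  set w : ℝ → ℂ := fun s => (v s : ℂ) * Complex.exp (-(z * s)) with hw
  have hexp : ∀ s : ℝ, HasDerivAt (fun s : ℝ => Complex.exp (-(z * s)))
      (Complex.exp (-(z * s)) * (-z)) s := by
    intro s
    have h2 : HasDerivAt (fun s : ℝ => -(z * (s : ℂ))) (-z) s := by
      simpa using ((Complex.ofRealCLM.hasDerivAt (x := s)).const_mul z).fun_neg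
    exact h2.cexp
  have hwderiv : ∀ s, HasDerivAt w
      (((deriv v s : ℝ) : ℂ) * Complex.exp (-(z * s)) - z * ((v s : ℂ) * Complex.exp (-(z * s)))) s := by
    intro s
    have h1 : HasDerivAt (fun s : ℝ => ((v s : ℂ))) (((deriv v s : ℝ) : ℂ)) s :=
      ((hv.differentiable (by simp) s).hasDerivAt).ofReal_comp
    have := h1.mul (hexp s)
    rw [show (((deriv v s : ℝ) : ℂ) * Complex.exp (-(z * s)) - z * ((v s : ℂ) * Complex.exp (-(z * s))))
        = ((deriv v s : ℝ) : ℂ) * Complex.exp (-(z * s)) + (v s : ℂ) * (Complex.exp (-(z * s)) * (-z)) by ring]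
    exact this
  have hcexp : Continuous fun s : ℝ => Complex.exp (-(z * s)) := by fun_prop
  have hcw : HasCompactSupport w := by
    apply HasCompactSupport.mul_right
    exact hcv.comp_left (g := fun x : ℝ => (x : ℂ)) Complex.ofReal_zero
  have hwC1 : ContDiff ℝ 1 w := by
    apply ContDiff.mul
    · exact (Complex.ofRealCLM.contDiff).comp (hv.of_le (by simp))
    · exact Complex.contDiff_exp.comp ((contDiff_const.mul Complex.ofRealCLM.contDiff).neg)
  have hint0 : ∫ s : ℝ, deriv w s = 0 := by
    have hcd : Continuous (deriv w) := hwC1.continuous_deriv le_rfl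
    have hintd : Integrable (deriv w) := hcd.integrable_of_hasCompactSupport hcw.deriv
    have h1 := hcw.integral_Ioi_deriv_eq hwC1 0
    have h2 := hcw.integral_Iic_deriv_eq hwC1 0
    rw [← intervalIntegral.integral_Iic_add_Ioi hintd.integrableOn hintd.integrableOn, h1, h2]
    ring
  have hderiv_eq : (deriv w) = fun s =>
      ((deriv v s : ℝ) : ℂ) * Complex.exp (-(z * s)) - z * ((v s : ℂ) * Complex.exp (-(z * s))) :=
    funext fun s => (hwderiv s).deriv
  have hi1 : Integrable fun s : ℝ => ((deriv v s : ℝ) : ℂ) * Complex.exp (-(z * s)) := by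
    apply Continuous.integrable_of_hasCompactSupport
    · exact (Complex.continuous_ofReal.comp (hv.continuous_deriv (by simp))).mul hcexp
    · exact (hcv.deriv.comp_left (g := fun x : ℝ => (x : ℂ)) Complex.ofReal_zero).mul_right
  have hi2 : Integrable fun s : ℝ => z * ((v s : ℂ) * Complex.exp (-(z * s))) := by
    apply Continuous.integrable_of_hasCompactSupport
    · exact continuous_const.mul ((Complex.continuous_ofReal.comp (hv.continuous)).mul hcexp)
    · exact ((hcv.comp_left (g := fun x : ℝ => (x : ℂ)) Complex.ofReal_zero).mul_right).mul_left
  rw [hderiv_eq, integral_sub hi1 hi2, integral_const_mul] at hint0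
  rw [sub_eq_zero] at hint0
  rw [hint0]

lemma my_integral_ofReal (f : ℝ → ℝ) (μ : Measure ℝ) :
    ∫ x, ((f x : ℝ) : ℂ) ∂μ = ((∫ x, f x ∂μ : ℝ) : ℂ) :=
  integral_ofReal

open MeasureTheory

/-- Left tempered fractional derivative (`0 < α < 1`):
`D₊^{α,λ} u(x) = (e^{−λx}/Γ(1−α)) (d/dx) ∫_{-∞}^x (x−η)^{−α} e^{λη} u(η) dη`. -/
noncomputable def leftTemperedDerivative (α lam : ℝ) (u : ℝ → ℝ) (x : ℝ) : ℝ :=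
  (Real.exp (-lam * x) / Real.Gamma (1 - α)) *
    deriv (fun y => ∫ η in Set.Iic y, (y - η) ^ (-α) * Real.exp (lam * η) * u η) x

theorem fourier_left_tempered_derivative (lam α : ℝ) (hlam : 0 < lam)
    (hα₀ : 0 < α) (hα₁ : α < 1) (u : ℝ → ℝ) (hu : ContDiff ℝ (⊤ : ℕ∞) u)
    (hsupp : HasCompactSupport u) (ω : ℝ) :
    ∫ x : ℝ, (leftTemperedDerivative α lam u x : ℂ) * Complex.exp (-Complex.I * ω * x) =
      ((lam : ℂ) + Complex.I * ω) ^ (α : ℂ) *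
        ∫ x : ℝ, (u x : ℂ) * Complex.exp (-Complex.I * ω * x) := by
  -- setup
  set v : ℝ → ℝ := fun s => Real.exp (lam * s) * u s with hvdef
  have hv : ContDiff ℝ (⊤ : ℕ∞) v := (Real.contDiff_exp.comp (contDiff_const.mul contDiff_id)).mul hu
  have hcv : HasCompactSupport v := hsupp.mul_left
  set k : ℝ → ℝ := Set.indicator (Set.Ioi 0) (fun t => t ^ (-α)) with hkdef
  have hkmeas : Measurable k := by
    have : k = Set.indicator (Set.Ioi 0) (fun t => Real.exp (Real.log t * (-α))) := by
      apply Set.indicator_congr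
      intro t ht
      exact Real.rpow_def_of_pos ht _
    rw [this]
    exact (Real.measurable_exp.comp (Real.measurable_log.mul_const _)).indicator
      measurableSet_Ioi
  have hkloc : LocallyIntegrable k := by
    rw [locallyIntegrable_iff]
    intro K hK
    obtain ⟨r, hr⟩ := hK.isBounded.subset_closedBall 0
    have h0r : (0:ℝ) ≤ max r 0 := le_max_right _ _
    have hioc : IntegrableOn (fun t : ℝ => t ^ (-α)) (Set.Ioc 0 (max r 0)) := by
      have := intervalIntegral.intervalIntegrable_rpow' (a := 0) (b := max r 0)
        (r := -α) (by linarith)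
      rwa [intervalIntegrable_iff_integrableOn_Ioc_of_le h0r] at this
    have hbound : Integrable (Set.indicator (Set.Ioc 0 (max r 0)) fun t : ℝ => t ^ (-α)) := by
      rwa [integrable_indicator_iff measurableSet_Ioc]
    refine Integrable.mono' hbound.integrableOn (hkmeas.aestronglyMeasurable.restrict) ?_
    filter_upwards [ae_restrict_mem hK.measurableSet] with t ht
    have htr : t ≤ max r 0 := by
      have := hr ht
      simp only [Metric.mem_closedBall, Real.dist_eq, sub_zero] at this
      exact le_trans (abs_le.mp this).2 (le_max_left _ _)
    by_cases h : t ∈ Set.Ioi (0:ℝ)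
    · rw [hkdef, Set.indicator_of_mem h, Set.indicator_of_mem (by exact ⟨h, htr⟩)]
      rw [Real.norm_eq_abs, _root_.abs_of_nonneg (Real.rpow_nonneg (le_of_lt h) _)]
    · rw [hkdef, Set.indicator_of_notMem h]
      simp only [norm_zero]
      apply Set.indicator_nonneg
      intro t' ht'
      exact Real.rpow_nonneg (le_of_lt ht'.1) _
  have hfun : (fun y => ∫ η in Set.Iic y, (y - η) ^ (-α) * Real.exp (lam * η) * u η)
      = k ⋆[ContinuousLinearMap.lsmul ℝ ℝ, volume] v := by
    funext y
    rw [convolution]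
    simp only [ContinuousLinearMap.lsmul_apply, smul_eq_mul]
    rw [← integral_sub_left_eq_self (fun t => k t * v (y - t)) volume y]
    simp only [sub_sub_cancel]
    rw [← integral_indicator measurableSet_Iic]
    congr 1
    funext η
    by_cases h : η ∈ Set.Iic y
    · rw [Set.indicator_of_mem h]
      rcases lt_or_eq_of_le (Set.mem_Iic.mp h) with h' | h'
      · rw [hkdef, Set.indicator_of_mem (by simp [sub_pos.mpr h'] : y - η ∈ Set.Ioi (0:ℝ))]
        ring
      · rw [hkdef, h', sub_self, Set.indicator_of_notMem (by simp : (0:ℝ) ∉ Set.Ioi (0:ℝ))]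
        rw [Real.zero_rpow (by linarith : -α ≠ 0)]
        ring
    · rw [Set.indicator_of_notMem h, hkdef,
        Set.indicator_of_notMem (by
          simp only [Set.mem_Iic, not_le] at h
          simp only [Set.mem_Ioi, not_lt]
          linarith : y - η ∉ Set.Ioi (0:ℝ))]
      ring
  have hderivconv : ∀ x, deriv (fun y => ∫ η in Set.Iic y,
      (y - η) ^ (-α) * (Real.exp (lam * η)) * u η) x
      = (k ⋆[ContinuousLinearMap.lsmul ℝ ℝ, volume] deriv v) x := by
    intro x
    rw [hfun]
    exact (HasCompactSupport.hasDerivAt_convolution_right _ hkloc hcv (hv.of_le (by simp)) x).deriv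
  -- complex frequency
  set z : ℂ := (lam : ℂ) + Complex.I * ω with hzdef
  have hzre : 0 < z.re := by
    simp only [hzdef, Complex.add_re, Complex.ofReal_re, Complex.mul_re, Complex.I_re,
      Complex.I_im, Complex.ofReal_im]
    simpa using hlam
  have hzne : z ≠ 0 := fun h => by simp [h] at hzre
  have hΓpos : 0 < Real.Gamma (1 - α) := Real.Gamma_pos_of_pos (by linarith)
  have hΓne : ((Real.Gamma (1 - α) : ℝ) : ℂ) ≠ 0 := by
    exact_mod_cast ne_of_gt hΓpos
  have hv'cont : Continuous (deriv v) := hv.continuous_deriv (by simp)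
  have hcv' : HasCompactSupport (deriv v) := hcv.deriv
  have hexpz : ∀ x : ℝ, Complex.exp (-(z * x)) =
      (Real.exp (-lam * x) : ℂ) * Complex.exp (-Complex.I * ω * x) := by
    intro x
    rw [show -(z * (x:ℂ)) = ((-lam * x : ℝ) : ℂ) + (-Complex.I * ω * x) by
      rw [hzdef]; push_cast; ring, Complex.exp_add, Complex.ofReal_exp]
  set F : ℂ := ∫ x : ℝ, (u x : ℂ) * Complex.exp (-Complex.I * ω * x) with hF
  set C : ℂ := ∫ s : ℝ, ((deriv v s : ℝ) : ℂ) * Complex.exp (-(z * s)) with hC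
  -- integrability facts
  have hcexp : Continuous fun s : ℝ => Complex.exp (-(z * s)) := by fun_prop
  have hint2 : Integrable (fun s : ℝ => ((deriv v s : ℝ) : ℂ) * Complex.exp (-(z * s))) := by
    apply Continuous.integrable_of_hasCompactSupport
    · exact (Complex.continuous_ofReal.comp hv'cont).mul hcexp
    · exact (hcv'.comp_left (g := fun x : ℝ => (x : ℂ)) Complex.ofReal_zero).mul_right
  have hkeq : (fun t : ℝ => ((k t : ℝ) : ℂ) * Complex.exp (-(z * t)))
      = Set.indicator (Set.Ioi 0) (fun t : ℝ => ((t ^ (-α) : ℝ) : ℂ) * Complex.exp (-(z * t))) := by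
    funext t
    by_cases h : t ∈ Set.Ioi (0:ℝ) <;>
      simp [hkdef, Set.indicator_of_mem, Set.indicator_of_notMem, h]
  have hpoweq : Set.EqOn (fun t : ℝ => (t : ℂ) ^ (((1 - α : ℝ) : ℂ) - 1) * Complex.exp (-(z * t)))
      (fun t : ℝ => ((t ^ (-α) : ℝ) : ℂ) * Complex.exp (-(z * t))) (Set.Ioi 0) := by
    intro t ht
    simp only
    rw [Complex.ofReal_cpow (le_of_lt ht)]
    norm_num
  have hint1 : Integrable (fun t : ℝ => ((k t : ℝ) : ℂ) * Complex.exp (-(z * t))) := by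
    rw [hkeq, integrable_indicator_iff measurableSet_Ioi]
    exact (aux_integrableOn (a := 1 - α) (by linarith) hzre).congr_fun hpoweq measurableSet_Ioi
  have hGammaInt : ∫ t : ℝ, ((k t : ℝ) : ℂ) * Complex.exp (-(z * t))
      = (z ^ (((1 - α : ℝ)) : ℂ))⁻¹ * ((Real.Gamma (1 - α) : ℝ) : ℂ) := by
    rw [hkeq, integral_indicator measurableSet_Ioi,
      ← setIntegral_congr_fun measurableSet_Ioi hpoweq,
      gamma_complex_scale (by linarith : (0:ℝ) < 1 - α) hzre, Complex.Gamma_ofReal]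
  -- Fubini setup
  set G : ℝ × ℝ → ℂ := fun p => ((k p.1 : ℝ) : ℂ) * ((deriv v (p.2 - p.1) : ℝ) : ℂ)
      * Complex.exp (-(z * p.2)) with hG
  have hGmeas : AEStronglyMeasurable G (volume.prod volume) := by
    apply Measurable.aestronglyMeasurable
    exact ((Complex.measurable_ofReal.comp (hkmeas.comp measurable_fst)).mul
      (Complex.measurable_ofReal.comp (hv'cont.measurable.comp
        (measurable_snd.sub measurable_fst)))).mul
      (Complex.measurable_exp.comp
        ((measurable_const.mul (Complex.measurable_ofReal.comp measurable_snd)).neg))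
  have hGint : Integrable G (volume.prod volume) := by
    have hmp := measurePreserving_prod_add (volume : Measure ℝ) volume
    rw [← hmp.integrable_comp hGmeas]
    have hcomp : G ∘ (fun p : ℝ × ℝ => (p.1, p.1 + p.2)) = fun p : ℝ × ℝ =>
        (((k p.1 : ℝ) : ℂ) * Complex.exp (-(z * p.1)))
          * (((deriv v p.2 : ℝ) : ℂ) * Complex.exp (-(z * p.2))) := by
      funext p
      simp only [Function.comp_apply, hG, add_sub_cancel_left]
      rw [show -(z * ((p.1 + p.2 : ℝ) : ℂ)) = -(z * p.1) + -(z * p.2) by push_cast; ring,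
        Complex.exp_add]
      ring
    rw [hcomp]
    exact hint1.mul_prod hint2
  -- main computation
  calc ∫ x : ℝ, (leftTemperedDerivative α lam u x : ℂ) * Complex.exp (-Complex.I * ω * x)
      = ∫ x : ℝ, ((Real.Gamma (1 - α) : ℝ) : ℂ)⁻¹ *
          ((((k ⋆[ContinuousLinearMap.lsmul ℝ ℝ, volume] deriv v) x : ℝ) : ℂ)
            * Complex.exp (-(z * x))) := by
        congr 1
        funext x
        rw [show leftTemperedDerivative α lam u x
            = Real.exp (-lam * x) / Real.Gamma (1 - α)
              * (k ⋆[ContinuousLinearMap.lsmul ℝ ℝ, volume] deriv v) x from by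
          unfold leftTemperedDerivative
          rw [hderivconv x]]
        rw [hexpz x]
        push_cast
        ring
    _ = ((Real.Gamma (1 - α) : ℝ) : ℂ)⁻¹ *
        ∫ x : ℝ, (((k ⋆[ContinuousLinearMap.lsmul ℝ ℝ, volume] deriv v) x : ℝ) : ℂ)
          * Complex.exp (-(z * x)) := integral_const_mul _ _
    _ = ((Real.Gamma (1 - α) : ℝ) : ℂ)⁻¹ * ∫ x : ℝ, ∫ t : ℝ, G (t, x) := by
        congr 1
        congr 1
        funext x
        have hconvx : ((k ⋆[ContinuousLinearMap.lsmul ℝ ℝ, volume] deriv v) x : ℝ)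
            = ∫ t : ℝ, k t * deriv v (x - t) := by
          rw [convolution]
          simp only [ContinuousLinearMap.lsmul_apply, smul_eq_mul]
        rw [hconvx, ← my_integral_ofReal, ← integral_mul_const]
        congr 1
        funext t
        simp only [hG]
        push_cast
        ring
    _ = ((Real.Gamma (1 - α) : ℝ) : ℂ)⁻¹ * ∫ t : ℝ, ∫ x : ℝ, G (t, x) := by
        congr 1
        exact integral_integral_swap hGint.swap
    _ = ((Real.Gamma (1 - α) : ℝ) : ℂ)⁻¹ *
        ∫ t : ℝ, ((k t : ℝ) : ℂ) * Complex.exp (-(z * t)) * C := by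
        congr 1
        congr 1
        funext t
        rw [← integral_add_right_eq_self (fun x => G (t, x)) t]
        have : (fun x : ℝ => G (t, x + t)) = fun x : ℝ =>
            (((k t : ℝ) : ℂ) * Complex.exp (-(z * t)))
              * (((deriv v x : ℝ) : ℂ) * Complex.exp (-(z * x))) := by
          funext x
          simp only [hG, add_sub_cancel_right]
          rw [show -(z * ((x + t : ℝ) : ℂ)) = -(z * x) + -(z * t) by push_cast; ring,
            Complex.exp_add]
          ring
        rw [this, integral_const_mul]
    _ = ((Real.Gamma (1 - α) : ℝ) : ℂ)⁻¹ *
        ((∫ t : ℝ, ((k t : ℝ) : ℂ) * Complex.exp (-(z * t))) * C) := by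
        rw [integral_mul_const]
    _ = ((Real.Gamma (1 - α) : ℝ) : ℂ)⁻¹ *
        ((z ^ (((1 - α : ℝ)) : ℂ))⁻¹ * ((Real.Gamma (1 - α) : ℝ) : ℂ) * (z * F)) := by
        rw [hGammaInt]
        congr 1
        congr 1
        -- C = z * F
        rw [hC, aux_parts v hv hcv z]
        congr 1
        congr 1
        funext s
        calc ((v s : ℝ) : ℂ) * Complex.exp (-(z * s))
            = ((Real.exp (lam * s) * Real.exp (-lam * s) : ℝ) : ℂ)
              * ((u s : ℂ) * Complex.exp (-Complex.I * ω * s)) := by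
              rw [hexpz s, hvdef]; push_cast; ring
          _ = (u s : ℂ) * Complex.exp (-Complex.I * ω * s) := by
              rw [← Real.exp_add]
              simp
    _ = z ^ (α : ℂ) * F := by
        have hne1 : z ^ (((1 - α : ℝ)) : ℂ) ≠ 0 := by
          rw [Ne, Complex.cpow_eq_zero_iff]
          tauto
        have hid : z ^ (α : ℂ) * z ^ (((1 - α : ℝ)) : ℂ) = z := by
          rw [← Complex.cpow_add _ _ hzne, show (α : ℂ) + ((1 - α : ℝ) : ℂ) = 1 by
            push_cast; ring, Complex.cpow_one]
        have h2 : (z ^ (((1 - α : ℝ)) : ℂ))⁻¹ * z = z ^ (α : ℂ) := by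
          rw [inv_mul_eq_iff_eq_mul₀ hne1, mul_comm]
          exact hid.symm
        calc ((Real.Gamma (1 - α) : ℝ) : ℂ)⁻¹ *
            ((z ^ (((1 - α : ℝ)) : ℂ))⁻¹ * ((Real.Gamma (1 - α) : ℝ) : ℂ) * (z * F))
            = (((Real.Gamma (1 - α) : ℝ) : ℂ)⁻¹ * ((Real.Gamma (1 - α) : ℝ) : ℂ))
              * (((z ^ (((1 - α : ℝ)) : ℂ))⁻¹ * z) * F) := by ring
          _ = z ^ (α : ℂ) * F := by rw [inv_mul_cancel₀ hΓne, h2, one_mul]
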